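/- arXiv:2206.00161 — 3 statements merged into one kernel-verified Lean document; each statement's English description precedes it below -/
import Mathlib

section
/- Let n ≥ 1 and 1 ≤ k ≤ n. If κ = (κ_1, …, κ_n) ∈ Γ_k, then Σ_{i=1}^n σ_{k-1}(κ|i) · κ_i² ≥ (k/n) · σ_1(κ) · σ_k(κ). -/
/-!
Since `σ_k(κ) = σ_k(κ|i) + κ_i σ_{k-1}(κ|i)`, double counting gives
`∑ σ_{k-1}(κ|i) κ_i² = σ_1 σ_k - (k+1) σ_{k+1}`, so the claim is `(k+1) σ_{k+1} ≤ (n-k)/n σ_1 σ_k`,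
i.e. `E_{k+1} ≤ E_1 E_k` for the means `E_j = σ_j / C(n,j)`. On `Γ_k` the means `E_0, …, E_k` are
positive, and this follows inductively from Newton's inequalities `E_j E_{j+2} ≤ E_{j+1}²`.

Newton's inequalities hold for the roots of any real-rooted polynomial, by induction on the degree:
by Rolle the derivative is again real-rooted and its roots have the same means `E_j`, which
reduces everything to `j + 2 = n`. There, with `P_i = ∏_{m ≠ i} κ_m`, one has `σ_{n-1} = ∑ P_i` and
`2 σ_{n-2} σ_n = (∑ P_i)² - ∑ P_i²`, and Cauchy–Schwarz concludes.
-/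

open Finset

/-- The `k`-th elementary symmetric polynomial of `κ : Fin n → ℝ`. -/
noncomputable def esymm {n : ℕ} (k : ℕ) (κ : Fin n → ℝ) : ℝ :=
  ∑ s ∈ Finset.univ.powersetCard k, ∏ i ∈ s, κ i

/-- `σ_k(κ|i)`: the `k`-th elementary symmetric polynomial of the tuple obtained
from `κ` by deleting the entry `κ i`. -/
noncomputable def esymmDel {n : ℕ} (k : ℕ) (κ : Fin n → ℝ) (i : Fin n) : ℝ :=
  ∑ s ∈ ({i}ᶜ : Finset (Fin n)).powersetCard k, ∏ j ∈ s, κ j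

/-- `σ_k(κ|i,j)`: the `k`-th elementary symmetric polynomial of the tuple obtained
from `κ` by deleting the entries `κ i` and `κ j`. -/
noncomputable def esymmDel2 {n : ℕ} (k : ℕ) (κ : Fin n → ℝ) (i j : Fin n) : ℝ :=
  ∑ s ∈ ({i, j}ᶜ : Finset (Fin n)).powersetCard k, ∏ l ∈ s, κ l

/-- The Garding cone `Γ_k = {κ : σ_j(κ) > 0 for all 1 ≤ j ≤ k}`. -/
def GardingCone {n : ℕ} (k : ℕ) : Set (Fin n → ℝ) :=
  {κ | ∀ j : ℕ, 1 ≤ j → j ≤ k → 0 < esymm j κ}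

section DoubleCounting

variable {ι M : Type*} [Fintype ι] [DecidableEq ι] [AddCommMonoid M]

theorem Finset.powersetCard_compl_singleton (i : ι) (k : ℕ) :
    ({i}ᶜ : Finset ι).powersetCard k = (univ.powersetCard k).filter (i ∉ ·) := by
  ext t
  simp [mem_powersetCard, subset_compl_singleton, and_comm]

theorem Finset.sum_powersetCard_compl_singleton_insert (i : ι) (k : ℕ) (f : Finset ι → M) :
    ∑ s ∈ ({i}ᶜ : Finset ι).powersetCard k, f (insert i s) =
      ∑ t ∈ (univ.powersetCard (k + 1)).filter (i ∈ ·), f t := by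
  refine sum_nbij' (insert i) (erase · i) ?_ ?_ ?_ ?_ (fun _ _ => rfl)
  all_goals intro t ht
  all_goals simp_all [mem_powersetCard, subset_compl_singleton]

theorem Finset.sum_sum_powersetCard_compl_singleton_insert (k : ℕ) (f : Finset ι → M) :
    ∑ i, ∑ s ∈ ({i}ᶜ : Finset ι).powersetCard k, f (insert i s) =
      (k + 1) • ∑ t ∈ univ.powersetCard (k + 1), f t := by
  simp_rw [sum_powersetCard_compl_singleton_insert, sum_filter]
  rw [sum_comm, smul_sum]
  refine sum_congr rfl fun t ht => ?_
  rw [mem_powersetCard_univ] at ht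
  rw [sum_ite_mem, univ_inter, sum_const, ht]

theorem Finset.sum_powersetCard_card_sub (m : ℕ) (hm : m ≤ Fintype.card ι) (f : Finset ι → M) :
    ∑ t ∈ univ.powersetCard (Fintype.card ι - m), f t = ∑ t ∈ univ.powersetCard m, f tᶜ := by
  refine sum_nbij' compl compl ?_ ?_ (fun t _ => compl_compl t) (fun t _ => compl_compl t) ?_
  all_goals intro t ht
  all_goals simp_all [card_compl]
  omega

end DoubleCounting

section Newton
open Polynomial

namespace Multiset

/-- For `k > card s` the binomial coefficient vanishes and so does `esymmMean s k`, as does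
`s.esymm k`; this is why Newton's inequality below needs no bound on `j`. -/
noncomputable def esymmMean (s : Multiset ℝ) (k : ℕ) : ℝ :=
  s.esymm k / (card s).choose k

theorem esymm_eq_zero_of_card_lt {s : Multiset ℝ} {k : ℕ} (h : card s < k) : s.esymm k = 0 := by
  simp [esymm, powersetCard_eq_empty _ h]

theorem esymmMean_eq_zero_of_card_lt {s : Multiset ℝ} {k : ℕ} (h : card s < k) :
    s.esymmMean k = 0 := by
  simp [esymmMean, Nat.choose_eq_zero_of_lt h]

theorem esymmMean_zero (s : Multiset ℝ) : s.esymmMean 0 = 1 := by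
  simp [esymmMean, esymm]

theorem choose_mul_esymmMean (s : Multiset ℝ) (k : ℕ) :
    ((card s).choose k : ℝ) * s.esymmMean k = s.esymm k := by
  rcases le_or_gt k (card s) with h | h
  · exact mul_div_cancel₀ _ (by exact_mod_cast (Nat.choose_pos h).ne')
  · rw [esymmMean_eq_zero_of_card_lt h, esymm_eq_zero_of_card_lt h, mul_zero]

end Multiset

theorem two_mul_card_mul_esymm_mul_esymm_le {ι : Type*} [Fintype ι] [DecidableEq ι] (κ : ι → ℝ)
    {j : ℕ} (hj : Fintype.card ι = j + 2) :
    2 * (j + 2) * ((univ.val.map κ).esymm j * (univ.val.map κ).esymm (j + 2)) ≤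
      (j + 1) * (univ.val.map κ).esymm (j + 1) ^ 2 := by
  set P : ι → ℝ := fun i => ∏ m ∈ univ.erase i, κ m
  have h_top : (univ.val.map κ).esymm (j + 1) = ∑ i, P i := by
    rw [esymm_map_val, show j + 1 = Fintype.card ι - 1 by omega,
      sum_powersetCard_card_sub 1 (by omega), powersetCard_one, sum_map]
    simp [P, compl_singleton]
  have h_pair : (univ.val.map κ).esymm j * (univ.val.map κ).esymm (j + 2) =
      ∑ t ∈ univ.powersetCard 2, ∏ i ∈ t, P i := by
    have h_univ : univ.powersetCard (j + 2) = {(univ : Finset ι)} := by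
      rw [← hj, ← card_univ, powersetCard_self]
    rw [esymm_map_val, esymm_map_val, h_univ, sum_singleton, show j = Fintype.card ι - 2 by omega,
      sum_powersetCard_card_sub 2 (by omega), sum_mul]
    refine sum_congr rfl fun t ht => ?_
    obtain ⟨a, b, hab, rfl⟩ := card_eq_two.mp (mem_powersetCard_univ.mp ht)
    have hb : b ∈ univ.erase a := mem_erase.mpr ⟨hab.symm, mem_univ b⟩
    have ha : a ∈ univ.erase b := mem_erase.mpr ⟨hab, mem_univ a⟩
    have h_compl : ({a, b} : Finset ι)ᶜ = (univ.erase a).erase b := by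
      ext; simp [and_comm]
    simp only [prod_pair hab, P, h_compl, ← mul_prod_erase univ κ (mem_univ a),
      ← mul_prod_erase _ κ hb, ← mul_prod_erase _ κ ha, erase_right_comm]
    ring
  have h_sq : 2 * ∑ t ∈ univ.powersetCard 2, ∏ i ∈ t, P i = (∑ i, P i) ^ 2 - ∑ i, P i ^ 2 := by
    have h_row (i : ι) : ∑ s ∈ ({i}ᶜ : Finset ι).powersetCard 1, ∏ m ∈ insert i s, P m =
        P i * (∑ l, P l) - P i ^ 2 := by
      rw [powersetCard_one, sum_map, compl_singleton, ← sum_erase_add _ _ (mem_univ i), mul_add,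
        mul_sum, sq, add_sub_cancel_right]
      exact sum_congr rfl fun l hl => prod_pair (ne_of_mem_erase hl).symm
    have := sum_sum_powersetCard_compl_singleton_insert 1 (fun t => ∏ i ∈ t, P i)
    simp only [h_row, sum_sub_distrib, ← sum_mul, nsmul_eq_mul, Nat.reduceAdd, Nat.cast_ofNat]
      at this
    linear_combination -this
  have h_cs : (∑ i, P i) ^ 2 ≤ (j + 2) * ∑ i, P i ^ 2 := by
    simpa [hj] using sq_sum_le_card_mul_sum_sq (s := univ) (f := P)
  rw [h_top, h_pair]
  linear_combination (j + 2 : ℝ) * h_sq + h_cs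

theorem Multiset.esymmMean_mul_esymmMean_le_sq_of_card_eq (s : Multiset ℝ) {j : ℕ}
    (hs : card s = j + 2) : s.esymmMean j * s.esymmMean (j + 2) ≤ s.esymmMean (j + 1) ^ 2 := by
  classical
  have h := two_mul_card_mul_esymm_mul_esymm_le (fun x : s => (x : ℝ)) (by rw [card_coe, hs])
  rw [Multiset.map_univ_coe] at h
  have h_choose : ((j + 2).choose j : ℝ) = (j + 2) * (j + 1) / 2 := by
    rw [Nat.choose_symm_add, Nat.cast_choose_two]
    push_cast; ring
  simp only [esymmMean, hs, h_choose, Nat.choose_self, Nat.choose_succ_self_right]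
  push_cast
  rw [div_mul_div_comm, div_pow, div_le_div_iff₀ (by positivity) (by positivity)]
  linear_combination ((j : ℝ) + 2) / 2 * h

namespace Polynomial

theorem card_roots_derivative {p : ℝ[X]} (hp : Multiset.card p.roots = p.natDegree) :
    Multiset.card (derivative p).roots = (derivative p).natDegree ∧
      (derivative p).natDegree = p.natDegree - 1 := by
  have := card_roots_le_derivative p
  have := card_roots' (derivative p)
  have := natDegree_derivative_le p
  omega

theorem natDegree_mul_esymm_roots_derivative {p : ℝ[X]} (hp : Multiset.card p.roots = p.natDegree)
    {i : ℕ} (hi : i < p.natDegree) :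
    (p.natDegree : ℝ) * (derivative p).roots.esymm i = (p.natDegree - i) * p.roots.esymm i := by
  obtain ⟨M, hM⟩ : ∃ M, p.natDegree = M + 1 := ⟨_, (Nat.succ_pred_eq_of_pos (by omega)).symm⟩
  obtain ⟨hp', hM'⟩ := card_roots_derivative hp
  rw [hM, Nat.add_sub_cancel] at hM'
  have hp0 : p.leadingCoeff ≠ 0 := leadingCoeff_ne_zero.mpr (by rintro rfl; simp at hM)
  have h_vieta := coeff_eq_esymm_roots_of_card hp (k := M + 1 - i) (by omega)
  have h_vieta' := coeff_eq_esymm_roots_of_card hp' (k := M - i) (by omega)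
  have h_lead : (derivative p).leadingCoeff = p.leadingCoeff * (M + 1) := by
    rw [leadingCoeff, hM', coeff_derivative, leadingCoeff, hM]
  rw [coeff_derivative, show M - i + 1 = M + 1 - i by omega, h_vieta, h_lead, hM', hM,
    show M + 1 - (M + 1 - i) = i by omega, show M - (M - i) = i by omega] at h_vieta'
  rw [hM]
  have h_unit : p.leadingCoeff * (-1) ^ i ≠ 0 := mul_ne_zero hp0 (pow_ne_zero _ (by norm_num))
  apply mul_left_cancel₀ h_unit
  push_cast [Nat.cast_sub (show i ≤ M by omega)] at h_vieta' ⊢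
  linear_combination -h_vieta'

theorem esymmMean_roots_derivative {p : ℝ[X]} (hp : Multiset.card p.roots = p.natDegree)
    {i : ℕ} (hi : i < p.natDegree) :
    (derivative p).roots.esymmMean i = p.roots.esymmMean i := by
  obtain ⟨M, hM⟩ : ∃ M, p.natDegree = M + 1 := ⟨_, (Nat.succ_pred_eq_of_pos (by omega)).symm⟩
  have h_esymm := natDegree_mul_esymm_roots_derivative hp hi
  obtain ⟨hp', hM'⟩ := card_roots_derivative hp
  rw [hM, Nat.add_sub_cancel] at hM'
  have h_choose := congrArg (Nat.cast : ℕ → ℝ) (Nat.choose_mul_succ_eq M i)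
  have hC : (0 : ℝ) < M.choose i := by exact_mod_cast Nat.choose_pos (by omega)
  have hC' : (0 : ℝ) < (M + 1).choose i := by exact_mod_cast Nat.choose_pos (by omega)
  rw [Multiset.esymmMean, Multiset.esymmMean, hp', hM', hp, hM, div_eq_div_iff hC.ne' hC'.ne']
  rw [hM] at h_esymm
  have hMi : (0 : ℝ) < M + 1 - i := by
    have : (i : ℝ) < M + 1 := by exact_mod_cast (hM ▸ hi)
    linarith
  apply mul_left_cancel₀ (mul_pos hMi (by positivity : (0 : ℝ) < M + 1)).ne'
  push_cast [Nat.cast_sub (show i ≤ M + 1 by omega)] at h_esymm h_choose ⊢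
  linear_combination ((M + 1 - i) * ((M + 1).choose i : ℝ)) * h_esymm
    - (M + 1 - i) * p.roots.esymm i * h_choose

theorem esymmMean_roots_mul_le_sq (p : ℝ[X]) (hp : Multiset.card p.roots = p.natDegree) (j : ℕ) :
    p.roots.esymmMean j * p.roots.esymmMean (j + 2) ≤ p.roots.esymmMean (j + 1) ^ 2 := by
  induction hN : p.natDegree generalizing p with
  | zero =>
    rw [Multiset.esymmMean_eq_zero_of_card_lt (k := j + 2) (by omega), mul_zero]
    positivity
  | succ M ih =>
    rcases lt_trichotomy (j + 2) (M + 1) with hlt | heq | hgt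
    · obtain ⟨hp', hM'⟩ := card_roots_derivative hp
      rw [hN, Nat.add_sub_cancel] at hM'
      simp only [← esymmMean_roots_derivative hp (hN ▸ hlt),
        ← esymmMean_roots_derivative hp (i := j) (by omega),
        ← esymmMean_roots_derivative hp (i := j + 1) (by omega)]
      exact ih _ hp' hM'
    · exact p.roots.esymmMean_mul_esymmMean_le_sq_of_card_eq (by omega)
    · rw [Multiset.esymmMean_eq_zero_of_card_lt (k := j + 2) (by omega), mul_zero]
      positivity

end Polynomial

theorem Multiset.esymmMean_mul_esymmMean_le_sq (s : Multiset ℝ) (j : ℕ) :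
    s.esymmMean j * s.esymmMean (j + 2) ≤ s.esymmMean (j + 1) ^ 2 := by
  have h := Polynomial.esymmMean_roots_mul_le_sq (s.map fun r => X - C r).prod
  rw [roots_multiset_prod_X_sub_C, natDegree_multiset_prod_X_sub_C_eq_card] at h
  exact h rfl j

end Newton

theorem succ_le_one_mul_of_mul_le_sq {E : ℕ → ℝ} (h0 : E 0 = 1)
    (hE : ∀ j, E j * E (j + 2) ≤ E (j + 1) ^ 2) :
    ∀ k, (∀ j ≤ k, 0 < E j) → E (k + 1) ≤ E 1 * E k
  | 0, _ => by rw [h0, mul_one]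
  | k + 1, hpos => by
    have ih := succ_le_one_mul_of_mul_le_sq h0 hE k fun j hj => hpos j (by omega)
    have hk := hpos k (by omega)
    refine le_of_mul_le_mul_left ?_ hk
    calc E k * E (k + 2) ≤ E (k + 1) * E (k + 1) := by rw [← sq]; exact hE k
      _ ≤ E (k + 1) * (E 1 * E k) := mul_le_mul_of_nonneg_left ih (hpos (k + 1) le_rfl).le
      _ = E k * (E 1 * E (k + 1)) := by ring

theorem Multiset.card_mul_succ_mul_esymm_le (s : Multiset ℝ) {k : ℕ}
    (hpos : ∀ j ≤ k, 0 < s.esymmMean j) :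
    card s * ((k + 1) * s.esymm (k + 1)) ≤ (card s - k) * (s.esymm 1 * s.esymm k) := by
  have hk : k ≤ card s := by
    by_contra! h
    exact (hpos k le_rfl).ne' (esymmMean_eq_zero_of_card_lt h)
  have h_mac :=
    succ_le_one_mul_of_mul_le_sq s.esymmMean_zero s.esymmMean_mul_esymmMean_le_sq k hpos
  have h_choose := congrArg (Nat.cast : ℕ → ℝ) (Nat.choose_succ_right_eq (card s) k)
  push_cast [Nat.cast_sub hk] at h_choose
  have h_coef : (0 : ℝ) ≤ card s * (card s - k) * (card s).choose k := by
    have : (k : ℝ) ≤ card s := by exact_mod_cast hk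
    have : (0 : ℝ) ≤ card s - k := by linarith
    positivity
  rw [← choose_mul_esymmMean s (k + 1), ← choose_mul_esymmMean s 1, ← choose_mul_esymmMean s k,
    Nat.choose_one_right]
  calc (card s : ℝ) * ((k + 1) * ((card s).choose (k + 1) * s.esymmMean (k + 1)))
      = (card s * (card s - k) * (card s).choose k) * s.esymmMean (k + 1) := by
        linear_combination (card s : ℝ) * s.esymmMean (k + 1) * h_choose
    _ ≤ (card s * (card s - k) * (card s).choose k) * (s.esymmMean 1 * s.esymmMean k) :=
        mul_le_mul_of_nonneg_left h_mac h_coef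
    _ = (card s - k) * ((card s) * s.esymmMean 1 * ((card s).choose k * s.esymmMean k)) := by
        ring

section Tuple
variable {n : ℕ} (κ : Fin n → ℝ)

theorem esymm_eq_esymm_map (k : ℕ) : esymm k κ = (univ.val.map κ).esymm k :=
  (Finset.esymm_map_val κ univ k).symm

theorem esymm_one : esymm 1 κ = ∑ i, κ i := by
  simp [esymm, powersetCard_one]

theorem mul_esymmDel_eq_sum (k : ℕ) (i : Fin n) :
    κ i * esymmDel k κ i = ∑ t ∈ (univ.powersetCard (k + 1)).filter (i ∈ ·), ∏ j ∈ t, κ j := by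
  rw [esymmDel, mul_sum, ← sum_powersetCard_compl_singleton_insert]
  refine sum_congr rfl fun s hs => ?_
  rw [prod_insert (subset_compl_singleton.mp (mem_powersetCard.mp hs).1)]

theorem esymm_succ_eq_esymmDel_add (k : ℕ) (i : Fin n) :
    esymm (k + 1) κ = esymmDel (k + 1) κ i + κ i * esymmDel k κ i := by
  rw [mul_esymmDel_eq_sum, esymmDel, powersetCard_compl_singleton, esymm,
    sum_filter_not_add_sum_filter]

theorem sum_mul_esymmDel (k : ℕ) :
    ∑ i, κ i * esymmDel k κ i = (k + 1) * esymm (k + 1) κ := by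
  rw [esymm, ← Nat.cast_succ, ← nsmul_eq_mul, ← sum_sum_powersetCard_compl_singleton_insert]
  exact sum_congr rfl fun i _ => by
    rw [mul_esymmDel_eq_sum, sum_powersetCard_compl_singleton_insert (f := fun t => ∏ j ∈ t, κ j)]

theorem sum_esymmDel_mul_sq (k : ℕ) :
    ∑ i, esymmDel k κ i * κ i ^ 2 = esymm 1 κ * esymm (k + 1) κ - (k + 2) * esymm (k + 2) κ := by
  have h (i : Fin n) :
      esymmDel k κ i * κ i ^ 2 = esymm (k + 1) κ * κ i - κ i * esymmDel (k + 1) κ i := by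
    linear_combination -κ i * esymm_succ_eq_esymmDel_add κ k i
  simp_rw [h, sum_sub_distrib, ← mul_sum, sum_mul_esymmDel, esymm_one]
  push_cast
  ring

end Tuple

/-- If `κ ∈ Γ_k`, then the sum of `σ_{k-1}(κ|i) * κ_i ^ 2` is at least `(k/n) σ₁ σ_k`. -/
theorem stmt_0 (n k : ℕ) (hn : 1 ≤ n) (hk1 : 1 ≤ k) (hk2 : k ≤ n)
    (κ : Fin n → ℝ) (hκ : κ ∈ GardingCone k) :
    ∑ i : Fin n, esymmDel (k - 1) κ i * (κ i) ^ 2 ≥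
      ((k : ℝ) / n) * esymm 1 κ * esymm k κ := by
  obtain ⟨m, rfl⟩ := Nat.exists_eq_add_of_le' hk1
  have hs : Multiset.card (univ.val.map κ) = n := by simp
  have hpos : ∀ j ≤ m + 1, 0 < (univ.val.map κ).esymmMean j := by
    intro j hj
    rcases j.eq_zero_or_pos with rfl | hj0
    · simp [Multiset.esymmMean_zero]
    · rw [Multiset.esymmMean, ← esymm_eq_esymm_map, hs]
      exact div_pos (hκ j hj0 hj) (by exact_mod_cast Nat.choose_pos (hj.trans hk2))
  have key := (univ.val.map κ).card_mul_succ_mul_esymm_le hpos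
  simp only [hs, ← esymm_eq_esymm_map] at key
  have hn0 : (0 : ℝ) < n := by exact_mod_cast hn
  rw [Nat.add_sub_cancel, sum_esymmDel_mul_sq, ge_iff_le, mul_assoc, div_mul_eq_mul_div,
    div_le_iff₀ hn0]
  push_cast at key ⊢
  linear_combination key
end

section
/- Let n ≥ 1 and 1 ≤ k ≤ n. If κ = (κ_1, …, κ_n) ∈ Γ_k with κ_1 ≥ κ_2 ≥ ⋯ ≥ κ_n, and κ_i ≤ 0 for some index i, then −κ_i ≤ ((n−k)/k) · κ_1. -/
open Finset

/-!
Deleting an entry `κ_i ≤ 0` keeps `κ` in `Γ_k`, and deleting any entry of a vector in `Γ_{k+1}`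
lands in `Γ_k`. The latter rests on the Newton inequality `σ_k σ_{k+2} ≤ σ_{k+1}²`, which follows
from the Laguerre inequality `f f'' ≤ f'²` for real-rooted polynomials (a class closed under
differentiation, by Rolle), applied at `0` to the derivatives of `∏ (X + κ_j)`.

With `κ' = κ|i`, positivity of `σ_k(κ) = σ_k(κ') + κ_i σ_{k-1}(κ')` gives
`-κ_i σ_{k-1}(κ') < σ_k(κ')`, while
`k σ_k(κ') = ∑_j κ_j σ_{k-1}(κ'|j) ≤ κ_1 ∑_j σ_{k-1}(κ'|j) = (n - k) κ_1 σ_{k-1}(κ')`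
because every `σ_{k-1}(κ'|j)` is positive. Dividing by `σ_{k-1}(κ') > 0` gives the bound.
-/

open Polynomial

namespace Polynomial

theorem Splits.derivative {f : ℝ[X]} (hf : f.Splits) : f.derivative.Splits := by
  rw [splits_iff_card_roots] at hf ⊢
  have h_rolle := card_roots_le_derivative f
  have h_roots := card_roots' f.derivative
  have h_deg := natDegree_derivative_le f
  omega

theorem Splits.eval_mul_eval_derivative_derivative_le {f : ℝ[X]} (hf : f.Splits) (x : ℝ) :
    f.eval x * f.derivative.derivative.eval x ≤ f.derivative.eval x ^ 2 := by
  induction hf using Submonoid.closure_induction with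
  | mem g hg => rcases hg with ⟨a, rfl⟩ | ⟨a, rfl⟩ <;> simp
  | one => simp
  | mul f g _ _ hf hg =>
    -- `(fg)'² - fg (fg)'' = g² (f'² - f f'') + f² (g'² - g g'')`
    simp only [derivative_mul, map_add, eval_add, eval_mul]
    nlinarith [mul_nonneg (sq_nonneg (g.eval x)) (sub_nonneg.2 hf),
      mul_nonneg (sq_nonneg (f.eval x)) (sub_nonneg.2 hg)]

theorem Splits.coeff_mul_coeff_le {f : ℝ[X]} (hf : f.Splits) (j : ℕ) :
    (j + 2) * (f.coeff j * f.coeff (j + 2)) ≤ (j + 1) * f.coeff (j + 1) ^ 2 := by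
  induction j generalizing f with
  | zero =>
    have h := hf.eval_mul_eval_derivative_derivative_le 0
    simp only [← coeff_zero_eq_eval_zero, coeff_derivative] at h
    norm_num at h ⊢
    linarith
  | succ j ih =>
    have h := ih hf.derivative
    simp only [coeff_derivative] at h
    push_cast at h ⊢
    refine le_of_mul_le_mul_left ?_ (by positivity : (0 : ℝ) < (j + 1) * (j + 2))
    linarith

end Polynomial

section ElementarySymmetric

variable {ι R : Type*}

def esymmOn [CommSemiring R] (A : Finset ι) (l : ℕ) (κ : ι → R) : R :=
  ∑ s ∈ A.powersetCard l, ∏ i ∈ s, κ i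

section CommSemiring

variable [CommSemiring R] {A : Finset ι} {κ : ι → R}

@[simp]
theorem esymmOn_zero (A : Finset ι) (κ : ι → R) : esymmOn A 0 κ = 1 := by
  simp [esymmOn]

theorem esymmOn_eq_zero_of_card_lt {l : ℕ} (h : #A < l) : esymmOn A l κ = 0 := by
  simp [esymmOn, powersetCard_eq_empty.2 h]

theorem esymmOn_eq_esymm_map_val (A : Finset ι) (l : ℕ) (κ : ι → R) :
    esymmOn A l κ = (A.val.map κ).esymm l :=
  (Finset.esymm_map_val κ A l).symm

variable [DecidableEq ι]

theorem esymmOn_insert {i : ι} (h : i ∉ A) (l : ℕ) :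
    esymmOn (insert i A) (l + 1) κ = esymmOn A (l + 1) κ + κ i * esymmOn A l κ := by
  simp only [esymmOn_eq_esymm_map_val, insert_val_of_notMem h, Multiset.map_cons,
    Multiset.esymm, Multiset.powersetCard_cons, Multiset.map_add, Multiset.sum_add,
    Multiset.map_map, Function.comp_def, Multiset.prod_cons, Multiset.sum_map_mul_left]

theorem esymmOn_erase {i : ι} (h : i ∈ A) (l : ℕ) :
    esymmOn A (l + 1) κ = esymmOn (A.erase i) (l + 1) κ + κ i * esymmOn (A.erase i) l κ := by
  rw [← esymmOn_insert (notMem_erase i A), insert_erase h]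

end CommSemiring

section CommRing

variable [CommRing R] [DecidableEq ι]

theorem sum_esymmOn_erase (A : Finset ι) (l : ℕ) (κ : ι → R) :
    ∑ j ∈ A, esymmOn (A.erase j) l κ = (#A - l : R) * esymmOn A l κ := by
  unfold esymmOn
  rw [sum_comm' (t' := A.powersetCard l) (s' := fun s => A \ s) (by
    intro j s
    simp only [mem_powersetCard, mem_sdiff, subset_erase]
    tauto), mul_sum]
  refine sum_congr rfl fun s hs => ?_
  rw [mem_powersetCard] at hs
  rw [sum_const, card_sdiff_of_subset hs.1, nsmul_eq_mul,
    Nat.cast_sub (hs.2 ▸ card_le_card hs.1), hs.2]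

theorem sum_mul_esymmOn_erase (A : Finset ι) (l : ℕ) (κ : ι → R) :
    ∑ j ∈ A, κ j * esymmOn (A.erase j) l κ = (l + 1) * esymmOn A (l + 1) κ := by
  have h := sum_congr rfl fun j (hj : j ∈ A) => esymmOn_erase (κ := κ) hj l
  rw [sum_const, sum_add_distrib, sum_esymmOn_erase, nsmul_eq_mul] at h
  push_cast at h
  linear_combination -h

end CommRing

theorem esymmOn_mul_esymmOn_le_sq (A : Finset ι) (k : ℕ) (κ : ι → ℝ) :
    esymmOn A k κ * esymmOn A (k + 2) κ ≤ esymmOn A (k + 1) κ ^ 2 := by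
  obtain hlt | ⟨j, hj⟩ : #A < k + 2 ∨ ∃ j, #A = j + k + 2 :=
    (lt_or_ge _ _).imp_right fun h => ⟨#A - (k + 2), by omega⟩
  · rw [esymmOn_eq_zero_of_card_lt hlt, mul_zero]
    positivity
  have hsplits : (∏ i ∈ A, (X + C (κ i))).Splits := Splits.prod fun i _ => Splits.X_add_C (κ i)
  have hcoeff : ∀ t ≤ #A, (∏ i ∈ A, (X + C (κ i))).coeff t = esymmOn A (#A - t) κ :=
    fun t ht => prod_X_add_C_coeff A κ ht
  have hnewton := hsplits.coeff_mul_coeff_le j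
  rw [hcoeff _ (by omega), hcoeff _ (by omega), hcoeff _ (by omega)] at hnewton
  rw [show #A - j = k + 2 by omega, show #A - (j + 1) = k + 1 by omega,
    show #A - (j + 2) = k by omega] at hnewton
  nlinarith [sq_nonneg (esymmOn A (k + 1) κ)]

end ElementarySymmetric

section Garding

variable {ι : Type*} {A : Finset ι} {κ : ι → ℝ} {k : ℕ}

/-- The restriction of `κ` to `A` lies in `Γ_k` (the condition at `l = 0` is vacuous). -/
def GardingOn (A : Finset ι) (k : ℕ) (κ : ι → ℝ) : Prop :=
  ∀ l ≤ k, 0 < esymmOn A l κ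

theorem mem_gardingCone_iff {n : ℕ} {κ : Fin n → ℝ} : κ ∈ GardingCone k ↔ GardingOn univ k κ :=
  ⟨fun h l hl => l.eq_zero_or_pos.elim (fun h0 => by simp [h0]) fun hl0 => h l hl0 hl,
    fun h l _ hl => h l hl⟩

theorem GardingOn.mono {l : ℕ} (h : GardingOn A k κ) (hlk : l ≤ k) : GardingOn A l κ :=
  fun m hm => h m (hm.trans hlk)

variable [DecidableEq ι]

theorem GardingOn.erase_of_nonpos {i : ι} (h : GardingOn A k κ) (hi : i ∈ A) (hκ : κ i ≤ 0) :
    GardingOn (A.erase i) k κ := by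
  intro l hl
  induction l with
  | zero => simp
  | succ l ih =>
    have h_split := h (l + 1) hl
    rw [esymmOn_erase hi] at h_split
    nlinarith [ih (by omega)]

theorem GardingOn.erase {i : ι} (h : GardingOn A (k + 1) κ) (hi : i ∈ A) :
    GardingOn (A.erase i) k κ := by
  induction k with
  | zero => intro l hl; simp [Nat.le_zero.1 hl]
  | succ k ih =>
    have h_prev := ih (h.mono (by omega))
    intro l hl
    rcases Nat.lt_or_eq_of_le hl with hl | rfl
    · exact h_prev l (by omega)
    set B := A.erase i
    have hR := h_prev k le_rfl
    have h1 := h (k + 1) (by omega)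
    have h2 := h (k + 2) le_rfl
    rw [esymmOn_erase hi] at h1 h2
    have h_newton := esymmOn_mul_esymmOn_le_sq B k κ
    by_contra! hP
    have hκ : 0 < κ i := by nlinarith
    -- `σ_{k+1}(B)² ≤ -σ_{k+1}(B) κ_i σ_k(B) < σ_{k+2}(B) σ_k(B)`, against Newton
    have h_lt : esymmOn B (k + 1) κ ^ 2 < esymmOn B k κ * esymmOn B (k + 2) κ := by
      nlinarith [mul_le_mul_of_nonneg_left
        (show -esymmOn B (k + 1) κ ≤ κ i * esymmOn B k κ by linarith) (neg_nonneg.2 hP)]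
    linarith

theorem GardingOn.mul_esymmOn_le {c : ℝ} (h : GardingOn A (k + 1) κ) (hc : ∀ j ∈ A, κ j ≤ c) :
    (k + 1) * esymmOn A (k + 1) κ ≤ (#A - k) * c * esymmOn A k κ := by
  rw [← sum_mul_esymmOn_erase]
  calc ∑ j ∈ A, κ j * esymmOn (A.erase j) k κ
      ≤ ∑ j ∈ A, c * esymmOn (A.erase j) k κ :=
        sum_le_sum fun j hj => mul_le_mul_of_nonneg_right (hc j hj) ((h.erase hj) k le_rfl).le
    _ = (#A - k) * c * esymmOn A k κ := by rw [← mul_sum, sum_esymmOn_erase]; ring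

theorem GardingOn.mul_neg_le {m : ι} {c : ℝ} (h : GardingOn A (k + 1) κ) (hm : m ∈ A)
    (hκm : κ m ≤ 0) (hc : ∀ j ∈ A.erase m, κ j ≤ c) :
    (k + 1) * -κ m ≤ (#A - (k + 1)) * c := by
  have hB := h.erase_of_nonpos hm hκm
  have h_split := h (k + 1) le_rfl
  rw [esymmOn_erase hm] at h_split
  have h_bound := hB.mul_esymmOn_le hc
  have h_card : (#(A.erase m) : ℝ) = #A - 1 := by
    rw [← card_erase_add_one hm, Nat.cast_add_one, add_sub_cancel_right]
  rw [h_card] at h_bound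
  refine le_of_mul_le_mul_right ?_ (hB k (by omega))
  nlinarith

end Garding

/-- If `κ ∈ Γ_k` is ordered decreasingly and `κ i ≤ 0`, then `-κ i ≤ ((n-k)/k) * κ₁`. -/
theorem stmt_1 (n k : ℕ) (hn : 1 ≤ n) (hk1 : 1 ≤ k)
    (κ : Fin n → ℝ) (hκ : κ ∈ GardingCone k) (hord : Antitone κ)
    (i : Fin n) (hi : κ i ≤ 0) :
    -κ i ≤ (((n : ℝ) - k) / k) * κ ⟨0, by omega⟩ := by
  obtain ⟨k, rfl⟩ := Nat.exists_eq_add_of_le' hk1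
  have h := (mem_gardingCone_iff.1 hκ).mul_neg_le (mem_univ i) hi
    (c := κ ⟨0, by omega⟩) fun j _ => hord (Nat.zero_le (j : ℕ))
  rw [card_univ, Fintype.card_fin] at h
  rw [div_mul_eq_mul_div, le_div_iff₀ (by positivity)]
  push_cast
  linarith
end

section
/- Let n ≥ 3. If κ = (κ_1, …, κ_n) ∈ Γ_{n−1} with κ_1 ≥ κ_2 ≥ ⋯ ≥ κ_n, then σ_1(κ) ≥ ((n−2)/(n−1)) · κ_1, and consequently max_{1≤i≤n} |κ_i| ≤ ((n−1)/(n−2)) · σ_1(κ). In particular, an upper bound on σ_1(κ) yields an upper bound on all |κ_i|. -/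
open Finset

section Aux

open Polynomial

lemma esymm_one_eq {n : ℕ} (κ : Fin n → ℝ) : esymm 1 κ = ∑ i, κ i := by
  unfold esymm
  rw [Finset.powersetCard_one, Finset.sum_map]
  simp

lemma esymm_zero_eq {n : ℕ} (κ : Fin n → ℝ) : esymm 0 κ = 1 := by
  simp [esymm]

lemma esymm_pred_eq {n : ℕ} (hn : 1 ≤ n) (κ : Fin n → ℝ) :
    esymm (n - 1) κ = ∑ i : Fin n, ∏ j ∈ ({i}ᶜ : Finset (Fin n)), κ j := by
  have himg : (univ : Finset (Fin n)).powersetCard (n - 1)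
      = univ.image (fun i : Fin n => ({i}ᶜ : Finset (Fin n))) := by
    ext s
    simp only [Finset.mem_powersetCard, Finset.mem_image, Finset.mem_univ, true_and]
    constructor
    · rintro ⟨-, hcard⟩
      have hc : #(sᶜ) = 1 := by
        rw [Finset.card_compl]
        have hle : #s ≤ n := by
          simpa using Finset.card_le_card (Finset.subset_univ s)
        simp only [Fintype.card_fin]
        omega
      obtain ⟨a, ha⟩ := Finset.card_eq_one.1 hc
      exact ⟨a, by rw [← ha, compl_compl]⟩
    · rintro ⟨a, rfl⟩
      constructor
      · exact Finset.subset_univ _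
      · rw [Finset.card_compl, Finset.card_singleton, Fintype.card_fin]
  unfold esymm
  rw [himg, Finset.sum_image]
  intro x _ y _ h
  exact Finset.singleton_injective (compl_injective h)

/-- At most one entry of `κ ∈ Γ_{n-1}` is nonpositive. -/
lemma atMostOne_nonpos {n : ℕ} (κ : Fin n → ℝ)
    (hσ : ∀ j : ℕ, 1 ≤ j → j ≤ n - 1 → 0 < esymm j κ)
    {i j : Fin n} (hij : i ≠ j) (hi : κ i ≤ 0) (hj : κ j ≤ 0) : False := by
  have hn : 1 ≤ n := by
    rcases Nat.eq_zero_or_pos n with h | h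
    · subst h; exact i.elim0
    · exact h
  set P : ℝ[X] := ∏ l, (X + C (κ l)) with hP
  have hcardu : #(univ : Finset (Fin n)) = n := by simp
  have hco : ∀ k : ℕ, k < n → (derivative P).coeff k = esymm (n - (k + 1)) κ * ((k : ℝ) + 1) := by
    intro k hk
    rw [Polynomial.coeff_derivative, hP,
      Finset.prod_X_add_C_coeff _ _ (by rw [hcardu]; omega)]
    rw [hcardu]
    rfl
  have hpos : ∀ k : ℕ, k < n → 0 < esymm (n - (k + 1)) κ := by
    intro k hk
    rcases Nat.eq_zero_or_pos (n - (k + 1)) with h | h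
    · rw [h, esymm_zero_eq]; norm_num
    · exact hσ _ h (by omega)
  have hdeg : (derivative P).natDegree < n := by
    have h1 : P.natDegree ≤ n := by
      refine le_trans (Polynomial.natDegree_prod_le _ _) ?_
      simp [Polynomial.natDegree_X_add_C]
    have h2 := Polynomial.natDegree_derivative_le P
    omega
  have hdpos : ∀ t : ℝ, 0 ≤ t → 0 < (derivative P).eval t := by
    intro t ht
    rw [Polynomial.eval_eq_sum_range' hdeg]
    apply Finset.sum_pos'
    · intro k hk
      rw [Finset.mem_range] at hk
      rw [hco k hk]
      have := hpos k hk
      positivity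
    · refine ⟨0, Finset.mem_range.2 (by omega), ?_⟩
      rw [hco 0 (by omega)]
      have := hpos 0 (by omega)
      simp only [pow_zero, mul_one]
      positivity
  have hmono : StrictMonoOn (fun t => P.eval t) (Set.Ici (0 : ℝ)) := by
    refine strictMonoOn_of_deriv_pos (convex_Ici 0) (P.continuous.continuousOn) ?_
    intro t ht
    rw [interior_Ici] at ht
    rw [Polynomial.deriv]
    exact hdpos t (le_of_lt ht)
  have heval : ∀ l : Fin n, P.eval (-κ l) = 0 := by
    intro l
    rw [hP, Polynomial.eval_prod]
    exact Finset.prod_eq_zero (Finset.mem_univ l) (by simp)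
  by_cases hab : κ i = κ j
  · -- double root
    have h1 : P = (X + C (κ i)) *
        ((X + C (κ j)) * ∏ l ∈ (univ.erase i).erase j, (X + C (κ l))) := by
      rw [hP, ← Finset.mul_prod_erase _ _ (Finset.mem_univ i),
        ← Finset.mul_prod_erase _ _ (Finset.mem_erase.2 ⟨hij.symm, Finset.mem_univ j⟩)]
    have h2 : (derivative P).eval (-κ i) = 0 := by
      rw [h1]
      have hji : -κ i + κ j = 0 := by rw [hab]; ring
      simp [Polynomial.derivative_mul, hji]
    exact absurd h2 (ne_of_gt (hdpos _ (neg_nonneg.2 hi)))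
  · have heq := hmono.injOn (Set.mem_Ici.2 (neg_nonneg.2 hi)) (Set.mem_Ici.2 (neg_nonneg.2 hj))
      (by rw [heval i, heval j])
    exact hab (neg_injective heq)

end Aux

/-- For ordered `κ ∈ Γ_{n-1}`: `σ₁(κ) ≥ ((n-2)/(n-1)) * κ₁`, and consequently
`|κ_i| ≤ ((n-1)/(n-2)) * σ₁(κ)` for every `i`. -/
theorem stmt_12 (n : ℕ) (hn : 3 ≤ n) (κ : Fin n → ℝ) (hκ : κ ∈ GardingCone (n - 1))
    (hord : Antitone κ) :
    esymm 1 κ ≥ (((n : ℝ) - 2) / ((n : ℝ) - 1)) * κ ⟨0, by omega⟩ ∧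
    ∀ i : Fin n, |κ i| ≤ (((n : ℝ) - 1) / ((n : ℝ) - 2)) * esymm 1 κ := by
  have hσ : ∀ j : ℕ, 1 ≤ j → j ≤ n - 1 → 0 < esymm j κ := hκ
  have hnR : (3 : ℝ) ≤ (n : ℝ) := by exact_mod_cast hn
  have hn1 : (0 : ℝ) < (n : ℝ) - 1 := by linarith
  have hn2 : (0 : ℝ) < (n : ℝ) - 2 := by linarith
  set z : Fin n := ⟨0, by omega⟩ with hzdef
  set m : Fin n := ⟨n - 1, by omega⟩ with hmdef
  have hz_le : ∀ i : Fin n, κ i ≤ κ z := by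
    intro i
    exact hord (by simp [hzdef, Fin.le_def])
  have hm_ge : ∀ i : Fin n, κ m ≤ κ i := by
    intro i
    refine hord ?_
    have := i.isLt
    simp only [hmdef, Fin.le_def]
    omega
  have hs1 : 0 < esymm 1 κ := hσ 1 le_rfl (by omega)
  have hsum : esymm 1 κ = ∑ i, κ i := esymm_one_eq κ
  have hz_pos : 0 < κ z := by
    by_contra h
    push_neg at h
    have : ∑ i, κ i ≤ 0 :=
      Finset.sum_nonpos fun i _ => le_trans (hz_le i) h
    rw [hsum] at hs1
    linarith
  have hval : ∀ i : Fin n, i ≠ m → (i : ℕ) < n - 1 := by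
    intro i h
    have h2 : (i : ℕ) ≠ n - 1 := fun hc => h (Fin.ext hc)
    have := i.isLt
    omega
  have hpos_lt : ∀ i : Fin n, i ≠ m → 0 < κ i := by
    intro i hi
    by_contra h
    push_neg at h
    exact atMostOne_nonpos κ hσ hi h (le_trans (hm_ge i) h)
  have hzm : z ≠ m := by
    simp only [hzdef, hmdef, ne_eq, Fin.mk.injEq]
    omega
  have hprod_pos : 0 < ∏ l ∈ univ.erase m, κ l :=
    Finset.prod_pos fun l hl => hpos_lt l (Finset.mem_erase.1 hl).1
  have hlast : κ m < 0 → ((n : ℝ) - 1) * (-κ m) < κ z := by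
    intro hmneg
    have hne : ∀ l : Fin n, κ l ≠ 0 := by
      intro l
      rcases eq_or_ne l m with rfl | h
      · exact ne_of_lt hmneg
      · exact ne_of_gt (hpos_lt l h)
    have hT : ∏ l, κ l = κ m * ∏ l ∈ univ.erase m, κ l :=
      (Finset.mul_prod_erase _ _ (Finset.mem_univ m)).symm
    have hTneg : ∏ l, κ l < 0 := by
      rw [hT]; exact mul_neg_of_neg_of_pos hmneg hprod_pos
    have hterm : ∀ i : Fin n, ∏ j ∈ ({i}ᶜ : Finset (Fin n)), κ j = (∏ l, κ l) / κ i := by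
      intro i
      rw [Finset.compl_singleton, eq_div_iff (hne i), mul_comm]
      exact Finset.mul_prod_erase _ _ (Finset.mem_univ i)
    have hs := hσ (n - 1) (by omega) le_rfl
    rw [esymm_pred_eq (by omega) κ] at hs
    simp_rw [hterm] at hs
    have hs3 : 0 < (∏ l, κ l) * ∑ i, (κ i)⁻¹ := by
      rw [Finset.mul_sum]
      simpa [div_eq_mul_inv] using hs
    have hSneg : ∑ i, (κ i)⁻¹ < 0 := by
      by_contra h
      push_neg at h
      nlinarith
    have hsplit : ∑ i, (κ i)⁻¹ = (κ m)⁻¹ + ∑ i ∈ univ.erase m, (κ i)⁻¹ :=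
      (Finset.add_sum_erase _ _ (Finset.mem_univ m)).symm
    have hbound : ((n : ℝ) - 1) * (κ z)⁻¹ ≤ ∑ i ∈ univ.erase m, (κ i)⁻¹ := by
      have hcard : #(univ.erase m) = n - 1 := by
        rw [Finset.card_erase_of_mem (Finset.mem_univ m)]
        simp
      have hle := Finset.card_nsmul_le_sum (univ.erase m) (fun i => (κ i)⁻¹) ((κ z)⁻¹)
        (fun i hi => inv_anti₀ (hpos_lt i (Finset.mem_erase.1 hi).1) (hz_le i))
      rw [hcard, nsmul_eq_mul] at hle
      have hcast : ((n - 1 : ℕ) : ℝ) = (n : ℝ) - 1 := by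
        push_cast [Nat.cast_sub (by omega : 1 ≤ n)]
        ring
      rw [hcast] at hle
      exact hle
    have hK : (κ m)⁻¹ + ((n : ℝ) - 1) * (κ z)⁻¹ < 0 := by
      rw [hsplit] at hSneg
      linarith
    have key : 0 < κ m * κ z * ((κ m)⁻¹ + ((n : ℝ) - 1) * (κ z)⁻¹) :=
      mul_pos_of_neg_of_neg (mul_neg_of_neg_of_pos hmneg hz_pos) hK
    have expand : κ m * κ z * ((κ m)⁻¹ + ((n : ℝ) - 1) * (κ z)⁻¹)
        = κ z + ((n : ℝ) - 1) * κ m := by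
      have h1 : κ m * (κ m)⁻¹ = 1 := mul_inv_cancel₀ (hne m)
      have h2 : κ z * (κ z)⁻¹ = 1 := mul_inv_cancel₀ (hne z)
      calc κ m * κ z * ((κ m)⁻¹ + ((n : ℝ) - 1) * (κ z)⁻¹)
          = κ z * (κ m * (κ m)⁻¹) + ((n : ℝ) - 1) * κ m * (κ z * (κ z)⁻¹) := by ring
        _ = κ z + ((n : ℝ) - 1) * κ m := by rw [h1, h2]; ring
    rw [expand] at key
    linarith
  have hsum_ge : κ z + κ m ≤ ∑ i, κ i := by
    rw [← Finset.add_sum_erase _ _ (Finset.mem_univ m)]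
    have hzmem : z ∈ univ.erase m := Finset.mem_erase.2 ⟨hzm, Finset.mem_univ _⟩
    rw [← Finset.add_sum_erase _ _ hzmem]
    have h0 : 0 ≤ ∑ i ∈ (univ.erase m).erase z, κ i :=
      Finset.sum_nonneg fun i hi =>
        (hpos_lt i (Finset.mem_erase.1 (Finset.mem_erase.1 hi).2).1).le
    linarith
  have part1 : esymm 1 κ ≥ (((n : ℝ) - 2) / ((n : ℝ) - 1)) * κ z := by
    rw [hsum, ge_iff_le, div_mul_eq_mul_div, div_le_iff₀ hn1]
    rcases lt_or_ge (κ m) 0 with hm | hm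
    · have hl := hlast hm
      nlinarith [mul_le_mul_of_nonneg_left hsum_ge hn1.le]
    · nlinarith [mul_le_mul_of_nonneg_left hsum_ge hn1.le, hz_pos, hm]
  refine ⟨part1, ?_⟩
  have hb : ((n : ℝ) - 2) * κ z ≤ ((n : ℝ) - 1) * esymm 1 κ := by
    rw [ge_iff_le, div_mul_eq_mul_div, div_le_iff₀ hn1] at part1
    linarith
  have hbz : κ z ≤ (((n : ℝ) - 1) / ((n : ℝ) - 2)) * esymm 1 κ := by
    rw [div_mul_eq_mul_div, le_div_iff₀ hn2]
    nlinarith [hs1, hnR]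
  intro i
  refine abs_le.2 ⟨?_, le_trans (hz_le i) hbz⟩
  rcases lt_or_ge (κ m) 0 with hm | hm
  · have hl := hlast hm
    have hmb : -((((n : ℝ) - 1) / ((n : ℝ) - 2)) * esymm 1 κ) ≤ κ m := by
      rw [neg_le, div_mul_eq_mul_div, le_div_iff₀ hn2]
      nlinarith [mul_lt_mul_of_pos_left hl hn2, hb, hs1]
    linarith [hm_ge i]
  · have hnn : 0 ≤ (((n : ℝ) - 1) / ((n : ℝ) - 2)) * esymm 1 κ :=
      mul_nonneg (div_nonneg hn1.le hn2.le) hs1.le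
    linarith [hm_ge i, hm]
end
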